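/- Let C_{k,l} ∈ ℂ^{n_k × n_k} for k, l = 1,…,m, and let Δ be their operator determinant. Define, for each k and each pair of indices i_k, j_k ∈ {1,…,n_k}, the matrix G_k(i_k, j_k) = D_{k,m}([C_{k,1}(i_k,j_k), C_{k,2}(i_k,j_k), …, C_{k,m}(i_k,j_k)]) ∈ ℂ^{C(m,k−1) × C(m,k)}. Then Δ((i_1,…,i_m),(j_1,…,j_m)) = G_1(i_1,j_1) · G_2(i_2,j_2) · ⋯ · G_m(i_m,j_m) for all multi-indices; in other words, Δ admits a representation as a TT-operator whose k-th internal rank is at most the binomial coefficient C(m,k). -/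

import Mathlib

open Matrix

/-- The operator determinant `|C k l|_⊗` of an `m × m` array of matrices
`C k l : Matrix (Fin (n k)) (Fin (n k)) ℂ`: the matrix
`∑ σ, sgn σ • C 0 (σ 0) ⊗ C 1 (σ 1) ⊗ ⋯ ⊗ C (m-1) (σ (m-1))`, realized on
multi-indices, so that the `m`-fold Kronecker product has entries
`∏ k, C k (σ k) (i k) (j k)`. -/
noncomputable def opDet (m : ℕ) (n : Fin m → ℕ)
    (C : (k : Fin m) → Fin m → Matrix (Fin (n k)) (Fin (n k)) ℂ) :
    Matrix ((k : Fin m) → Fin (n k)) ((k : Fin m) → Fin (n k)) ℂ :=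
  ∑ σ : Equiv.Perm (Fin m), (Equiv.Perm.sign σ : ℤ) •
    Matrix.of fun i j => ∏ k, C k (σ k) (i k) (j k)

/-- The matrices `D_{k,n}(a) ∈ ℂ^{C(n,k-1) × C(n,k)}` of Jurkat–Ryser, defined
recursively: `D_{1,n}(a)` is the row vector `[a 1, …, a n]`; `D_{n,n}(a)` is the column
vector `[a n, -a (n-1), …, (-1)^(n-1) • a 1]ᵀ`; and for `2 ≤ k ≤ n - 1`,
`D_{k,n}(a)` is the block matrix
`[[D_{k-1,n-1}(a 2, …, a n), 0], [(-1)^(k-1) a 1 • I, D_{k,n-1}(a 2, …, a n)]]`.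
(Values outside `1 ≤ k ≤ n` are junk.) -/
noncomputable def D : (n : ℕ) → (k : ℕ) → (Fin n → ℂ) →
    Matrix (Fin (n.choose (k - 1))) (Fin (n.choose k)) ℂ
  | 0, _, _ => 0
  | _ + 1, 0, _ => 0
  | n + 1, 1, a =>
      Matrix.of fun _ (j : Fin ((n + 1).choose 1)) =>
        a (Fin.cast (Nat.choose_one_right (n + 1)) j)
  | n + 1, k + 2, a =>
      if h : k + 2 = n + 1 then
        Matrix.of fun (i : Fin ((n + 1).choose (k + 1))) _ =>
          (-1 : ℂ) ^ (i : ℕ) *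
            a (Fin.rev (Fin.cast
              (show (n + 1).choose (k + 1) = n + 1 by
                have hkn : k + 1 = n := by omega
                rw [hkn]; exact Nat.choose_succ_self_right n) i))
      else if h2 : k + 2 ≤ n then
        Matrix.reindex
          (finSumFinEquiv.trans (finCongr (Nat.choose_succ_succ n k).symm))
          (finSumFinEquiv.trans (finCongr (Nat.choose_succ_succ n (k + 1)).symm))
          (Matrix.fromBlocks
            (D n (k + 1) (a ∘ Fin.succ))
            (0 : Matrix (Fin (n.choose k)) (Fin (n.choose (k + 2))) ℂ)
            (((-1 : ℂ) ^ (k + 1) * a 0) •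
              (1 : Matrix (Fin (n.choose (k + 1))) (Fin (n.choose (k + 1))) ℂ))
            (D n (k + 2) (a ∘ Fin.succ)))
      else 0

/-- The chain product `D_{1,n}(v 0) * D_{2,n}(v 1) * ⋯ * D_{k,n}(v (k-1))`, a
`C(n,0) × C(n,k)` matrix. -/
noncomputable def DChain (n : ℕ) (v : ℕ → Fin n → ℂ) :
    (k : ℕ) → Matrix (Fin (n.choose 0)) (Fin (n.choose k)) ℂ
  | 0 => 1
  | k + 1 => DChain n v k *
      Matrix.reindex (finCongr (congrArg n.choose (Nat.succ_sub_one k))) (Equiv.refl _)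
        (D n (k + 1) (v k))

/-! The `(i, j)` entry of the operator determinant is the determinant of the scalar matrix
`M k l = C k l (i k) (j k)`. The product `D_{1,m}(M 0) ⋯ D_{k,m}(M (k-1))` is the row of all
`k × k` minors of the first `k` rows of `M`, indexed by column subsets. Splitting these subsets
by whether they contain the first column, the block structure of the `D_{k,m}` reproduces
Laplace's expansion along that column, so induction on `m` yields the determinant at `k = m`. -/

noncomputable def DFactor (n k : ℕ) (a : Fin n → ℂ) :
    Matrix (Fin (n.choose k)) (Fin (n.choose (k + 1))) ℂ :=
  reindex (finCongr (congrArg n.choose (Nat.succ_sub_one k))) (Equiv.refl _) (D n (k + 1) a)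

/-- In the block structure of `D`, the first summand indexes the `(k + 1)`-subsets of
`Fin (n + 1)` containing `0`, the second those avoiding it. -/
def chooseSuccEquiv (n k : ℕ) :
    Fin ((n + 1).choose (k + 1)) ≃ Fin (n.choose k) ⊕ Fin (n.choose (k + 1)) :=
  (finCongr (Nat.choose_succ_succ n k)).trans finSumFinEquiv.symm

@[simp]
lemma val_chooseSuccEquiv_symm_inl (n k : ℕ) (i : Fin (n.choose k)) :
    ((chooseSuccEquiv n k).symm (Sum.inl i) : ℕ) = i := rfl

@[simp]
lemma val_chooseSuccEquiv_symm_inr (n k : ℕ) (i : Fin (n.choose (k + 1))) :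
    ((chooseSuccEquiv n k).symm (Sum.inr i) : ℕ) = n.choose k + i := rfl

lemma DFactor_zero_apply (n : ℕ) (a : Fin n → ℂ) (i : Fin (n.choose 0))
    (j : Fin (n.choose 1)) :
    DFactor n 0 a i j = a (Fin.cast (Nat.choose_one_right n) j) := by
  cases n with
  | zero => exact j.elim0
  | succ n => rfl

lemma DFactor_self_apply (n : ℕ) (a : Fin (n + 1) → ℂ) (i : Fin ((n + 1).choose n))
    (j : Fin ((n + 1).choose (n + 1))) :
    DFactor (n + 1) n a i j =
      (-1 : ℂ) ^ (i : ℕ) * a (Fin.rev (Fin.cast (Nat.choose_succ_self_right n) i)) := by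
  cases n with
  | zero =>
    have hi : (i : ℕ) = 0 := by simpa using i.isLt
    rw [DFactor_zero_apply, hi, pow_zero, one_mul]
    congr 1
    ext
    simp
  | succ n =>
    simp only [DFactor, reindex_apply, submatrix_apply]
    rw [D, dif_pos rfl]
    rfl

lemma DFactor_zero_eq_fromCols (n : ℕ) (a : Fin (n + 1) → ℂ) :
    DFactor (n + 1) 0 a =
      (fromCols (a 0 • (1 : Matrix (Fin (n.choose 0)) (Fin (n.choose 0)) ℂ))
        (DFactor n 0 (a ∘ Fin.succ))).submatrix
        (Fin.cast (by simp)) (chooseSuccEquiv n 0) := by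
  ext i j
  obtain ⟨j, rfl⟩ := (chooseSuccEquiv n 0).symm.surjective j
  simp only [submatrix_apply, Equiv.apply_symm_apply, DFactor_zero_apply]
  rcases j with j | j
  · have hj : (j : ℕ) = 0 := by simpa using j.isLt
    have hij : Fin.cast (by simp) i = j := by ext; simpa [hj] using i.isLt
    rw [fromCols_apply_inl, Matrix.smul_apply, hij, one_apply_eq, smul_eq_mul, mul_one]
    congr 1
    ext
    simp [hj]
  · rw [fromCols_apply_inr, DFactor_zero_apply]
    congr 1
    ext
    simp [add_comm]

lemma DFactor_self_eq_fromBlocks (k : ℕ) (a : Fin (k + 2) → ℂ) :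
    DFactor (k + 2) (k + 1) a =
      (fromBlocks (DFactor (k + 1) k (a ∘ Fin.succ)) 0
        (((-1 : ℂ) ^ (k + 1) * a 0) •
          (1 : Matrix (Fin ((k + 1).choose (k + 1))) (Fin ((k + 1).choose (k + 1))) ℂ))
        (DFactor (k + 1) (k + 1) (a ∘ Fin.succ))).submatrix
        (chooseSuccEquiv (k + 1) k) (chooseSuccEquiv (k + 1) (k + 1)) := by
  ext i j
  obtain ⟨i, rfl⟩ := (chooseSuccEquiv _ _).symm.surjective i
  obtain ⟨j, rfl⟩ := (chooseSuccEquiv _ _).symm.surjective j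
  simp only [submatrix_apply, Equiv.apply_symm_apply, DFactor_self_apply]
  have hc : (k + 1).choose (k + 1 + 1) = 0 := Nat.choose_eq_zero_of_lt (by omega)
  rcases j with j | j
  · rcases i with i | i
    · rw [fromBlocks_apply₁₁, DFactor_self_apply, val_chooseSuccEquiv_symm_inl]
      congr 2
      ext
      have := i.isLt
      simp [Nat.choose_succ_self_right] at this ⊢
      omega
    · have hi : (i : ℕ) = 0 := by simpa using i.isLt
      obtain rfl : i = j := by ext; simpa [hi, eq_comm] using j.isLt
      rw [fromBlocks_apply₂₁, Matrix.smul_apply, one_apply_eq, smul_eq_mul, mul_one]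
      congr 2
      · simp [hi, Nat.choose_succ_self_right]
      · ext
        simp [hi]
  · exact absurd j.isLt (by omega)

lemma DFactor_succ_eq_fromBlocks (n k : ℕ) (hk : k + 1 ≤ n) (a : Fin (n + 1) → ℂ) :
    DFactor (n + 1) (k + 1) a =
      (fromBlocks (DFactor n k (a ∘ Fin.succ)) 0
        (((-1 : ℂ) ^ (k + 1) * a 0) •
          (1 : Matrix (Fin (n.choose (k + 1))) (Fin (n.choose (k + 1))) ℂ))
        (DFactor n (k + 1) (a ∘ Fin.succ))).submatrix
        (chooseSuccEquiv n k) (chooseSuccEquiv n (k + 1)) := by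
  obtain rfl | hk := hk.eq_or_lt
  · exact DFactor_self_eq_fromBlocks k a
  · simp only [DFactor, reindex_apply]
    rw [D, dif_neg (by omega), dif_pos (by omega)]
    rfl

lemma DChain_succ (n : ℕ) (v : ℕ → Fin n → ℂ) (k : ℕ) :
    DChain n v (k + 1) = DChain n v k * DFactor n k (v k) := rfl

lemma DChain_congr {n : ℕ} {v w : ℕ → Fin n → ℂ} {k : ℕ} (h : ∀ u < k, v u = w u) :
    DChain n v k = DChain n w k := by
  induction k with
  | zero => rfl
  | succ k ih => rw [DChain_succ, DChain_succ, ih fun u hu => h u (by omega), h k (by omega)]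

/-- The `ℕ`-indexed counterpart of `Fin.succAbove`: enumerates `ℕ \ {s}` in increasing order. -/
def skipIndex (s u : ℕ) : ℕ := if u < s then u else u + 1

lemma skipIndex_of_lt {s u : ℕ} (h : u < s) : skipIndex s u = u := if_pos h

lemma skipIndex_of_le {s u : ℕ} (h : s ≤ u) : skipIndex s u = u + 1 := if_neg h.not_gt

lemma val_succAbove_eq_skipIndex {n : ℕ} (s : Fin (n + 1)) (u : Fin n) :
    (s.succAbove u : ℕ) = skipIndex s u := by
  rcases lt_or_ge (u : ℕ) s with h | h
  · rw [skipIndex_of_lt h, Fin.succAbove_of_castSucc_lt _ _ h, Fin.val_castSucc]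
  · rw [skipIndex_of_le h, Fin.succAbove_of_le_castSucc _ _ h, Fin.val_succ]

lemma DChain_succ_eq_fromCols (n : ℕ) (v : ℕ → Fin (n + 1) → ℂ) (k : ℕ) (hk : k ≤ n) :
    DChain (n + 1) v (k + 1) =
      (fromCols
        (∑ s ∈ Finset.range (k + 1), ((-1 : ℂ) ^ s * v s 0) •
          DChain n (fun u => v (skipIndex s u) ∘ Fin.succ) k)
        (DChain n (fun u => v u ∘ Fin.succ) (k + 1))).submatrix
        (Fin.cast (by simp)) (chooseSuccEquiv n k) := by
  induction k with
  | zero =>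
    simp only [DChain_succ, DChain.eq_1, Matrix.one_mul, DFactor_zero_eq_fromCols,
      zero_add, Finset.sum_range_one, pow_zero, one_mul]
  | succ k ih =>
    rw [DChain_succ, ih (by omega), DFactor_succ_eq_fromBlocks n k hk, submatrix_mul_equiv,
      fromCols_mul_fromBlocks, Matrix.mul_zero, zero_add, ← DChain_succ,
      Finset.sum_range_succ _ (k + 1), Matrix.sum_mul, Matrix.mul_smul, Matrix.mul_one]
    congr 3
    · refine Finset.sum_congr rfl fun s hs => ?_
      rw [Matrix.smul_mul, DChain_succ, skipIndex_of_le (by simpa using hs)]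
    · exact congrArg _ (DChain_congr fun u hu => by rw [skipIndex_of_lt hu])

lemma DChain_self_apply_eq_det (n : ℕ) (v : ℕ → Fin n → ℂ) (p : Fin (n.choose 0))
    (q : Fin (n.choose n)) :
    DChain n v n p q = (of fun k l : Fin n => v k l).det := by
  induction n with
  | zero => simp [DChain.eq_1, Subsingleton.elim (α := Fin 1) p q]
  | succ n ih =>
    obtain ⟨q, rfl⟩ := (chooseSuccEquiv n n).symm.surjective q
    rcases q with q | q
    · rw [DChain_succ_eq_fromCols n v n le_rfl, submatrix_apply, Equiv.apply_symm_apply,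
        fromCols_apply_inl, Matrix.sum_apply, det_succ_column_zero, ← Fin.sum_univ_eq_sum_range]
      refine Finset.sum_congr rfl fun s _ => ?_
      rw [Matrix.smul_apply, ih, smul_eq_mul]
      congr 2
      ext k l
      simp [val_succAbove_eq_skipIndex]
    · exact absurd q.isLt (by simp)

lemma opDet_apply_eq_det (m : ℕ) (n : Fin m → ℕ)
    (C : (k : Fin m) → Fin m → Matrix (Fin (n k)) (Fin (n k)) ℂ)
    (i j : (k : Fin m) → Fin (n k)) :
    opDet m n C i j = (of fun k l => C k l (i k) (j k)).det := by
  rw [← det_transpose, det_apply']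
  simp [opDet, Matrix.sum_apply]

/-- every entry of the operator determinant of the array `(C k l)` equals
the corresponding entry of the product `G_1(i_1,j_1) ⋯ G_m(i_m,j_m)` of the TT-operator
cores `G_k(i_k, j_k) = D_{k,m}(C k 1 (i k) (j k), …, C k m (i k) (j k))`, a
`C(m,k-1) × C(m,k)` matrix; in particular the operator determinant is a TT-operator whose
`k`-th internal rank is at most the binomial coefficient `C(m,k)`. -/
theorem opDet_eq_tt_operator (m : ℕ) (n : Fin m → ℕ)
    (C : (k : Fin m) → Fin m → Matrix (Fin (n k)) (Fin (n k)) ℂ)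
    (i j : (k : Fin m) → Fin (n k))
    (p : Fin (m.choose 0)) (q : Fin (m.choose m)) :
    opDet m n C i j =
      DChain m
        (fun k l => if h : k < m then C ⟨k, h⟩ l (i ⟨k, h⟩) (j ⟨k, h⟩) else 0) m p q := by
  rw [opDet_apply_eq_det, DChain_self_apply_eq_det]
  congr
  ext k l
  simp
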